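/- arXiv:1809.09681 — 4 statements merged into one kernel-verified Lean document; each statement's English description precedes it below -/
import Mathlib

section
/- For every nonnegative integer d, the value of the polynomial P_{d,d}(z) = \sum_{b=0}^{\lfloor d/2 \rfloor} \binom{2d-b}{d, b, d-2b} z^b at z = -1/3 equals 3^d \prod_{k=1}^{d} (1 - 1/(3k)); in particular P_{d,d}(-1/3) \neq 0. -/
/-- The multinomial coefficient `(a+b+c)! / (a! b! c!)`. -/
def mult3 (a b c : ℕ) : ℕ := (a + b + c).factorial / (a.factorial * b.factorial * c.factorial)

/-- `P k n z = ∑_{b=0}^{⌊n/2⌋} multinomial(k+n-b; k, b, n-2b) z^b`. -/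
def Ppoly (k n : ℕ) (z : ℚ) : ℚ :=
  ∑ b ∈ Finset.range (n / 2 + 1), (mult3 k b (n - 2 * b) : ℚ) * z ^ b

/-!
Write `t d b` for the `b`-th term of `p_d(-1/3)`. With
`G d b = -3 (d+1) · (2d+1-b)! / ((d+1)! (b-1)! (d+1-2b)!) · (-1/3)^b`
one has the Wilf–Zeilberger relation `(d+1) t (d+1) b - (3d+2) t d b = G d (b+1) - G d b`,
which telescopes over `b` to `(d+1) p_{d+1}(-1/3) = (3d+2) p_d(-1/3)`. Since
`(3d+2)/(d+1) = 3 (1 - 1/(3(d+1)))`, the product formula follows by induction, and each factor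
is positive.
-/

open Finset

-- Extended by zero so that `invFact (n - 1) = n * invFact n` holds for every integer `n`:
-- the terms that fall off the ends of the sums then need no separate treatment.
def invFact (n : ℤ) : ℚ := if n < 0 then 0 else (n.toNat.factorial : ℚ)⁻¹

lemma invFact_natCast (n : ℕ) : invFact n = (n.factorial : ℚ)⁻¹ := by
  simp [invFact]

lemma invFact_of_neg {n : ℤ} (h : n < 0) : invFact n = 0 := if_pos h

lemma invFact_sub_one (n : ℤ) : invFact (n - 1) = n * invFact n := by
  obtain h | h := lt_or_ge n 0
  · rw [invFact_of_neg h, invFact_of_neg (by omega), mul_zero]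
  lift n to ℕ using h
  cases n with
  | zero => simp [invFact_of_neg]
  | succ n =>
    rw [Nat.cast_succ, add_sub_cancel_right, ← Nat.cast_succ, invFact_natCast, invFact_natCast,
      Nat.factorial_succ]
    push_cast
    field_simp

-- `(k+b+c)! / (k! b! c!)`, zero as soon as `b < 0` or `c < 0`.
def trinom (k : ℕ) (b c : ℤ) : ℚ :=
  ((k + b + c).toNat.factorial : ℚ) / k.factorial * invFact b * invFact c

lemma trinom_of_add_eq {k : ℕ} {b c : ℤ} {m : ℕ} (h : k + b + c = m) :
    trinom k b c = (m.factorial : ℚ) / k.factorial * invFact b * invFact c := by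
  rw [trinom, h, Int.toNat_natCast]

lemma trinom_of_neg_left (k : ℕ) {b : ℤ} (c : ℤ) (hb : b < 0) : trinom k b c = 0 := by
  rw [trinom, invFact_of_neg hb, mul_zero, zero_mul]

lemma trinom_of_neg_right (k : ℕ) (b : ℤ) {c : ℤ} (hc : c < 0) : trinom k b c = 0 := by
  rw [trinom, invFact_of_neg hc, mul_zero]

lemma mult3_eq_trinom (k b c : ℕ) : (mult3 k b c : ℚ) = trinom k b c := by
  have hdvd : k.factorial * b.factorial * c.factorial ∣ (k + b + c).factorial :=
    (mul_dvd_mul_right (Nat.factorial_mul_factorial_dvd_factorial_add k b) _).trans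
      (Nat.factorial_mul_factorial_dvd_factorial_add (k + b) c)
  rw [mult3, Nat.cast_div hdvd (by positivity),
    trinom_of_add_eq (m := k + b + c) (by push_cast; ring), invFact_natCast, invFact_natCast]
  push_cast
  ring

lemma Ppoly_eq_sum_trinom (k n N : ℕ) (hN : n / 2 < N) (z : ℚ) :
    Ppoly k n z = ∑ b ∈ range N, trinom k b (n - 2 * b) * z ^ b := by
  rw [Ppoly, ← sum_subset (range_subset_range.mpr (by omega : n / 2 + 1 ≤ N))]
  · refine sum_congr rfl fun b hb => ?_
    rw [mem_range] at hb
    rw [mult3_eq_trinom, Nat.cast_sub (show 2 * b ≤ n by omega)]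
    push_cast
    rfl
  · intro b _ hb
    rw [mem_range] at hb
    rw [trinom_of_neg_right _ _ (by omega), zero_mul]

def wzCert (d b : ℕ) : ℚ :=
  -3 * (d + 1) * trinom (d + 1) (b - 1) (d + 1 - 2 * b) * (-1 / 3) ^ b

lemma wzCert_succ_sub (d b : ℕ) (hb : 2 * b ≤ d + 1) :
    (d + 1) * (trinom (d + 1) b (↑(d + 1) - 2 * b) * (-1 / 3) ^ b)
      - (3 * d + 2) * (trinom d b (d - 2 * b) * (-1 / 3) ^ b) = wzCert d (b + 1) - wzCert d b := by
  -- every term is a polynomial multiple of `m! / d! · invFact b · invFact (d+1-2b) · (-1/3)^b`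
  obtain ⟨m, hm⟩ : ∃ m, 2 * d = m + b := ⟨2 * d - b, by omega⟩
  have h1 : invFact (d - 2 * b) = ((d + 1 - 2 * b : ℤ) : ℚ) * invFact (d + 1 - 2 * b) := by
    rw [← invFact_sub_one]; congr 1; ring
  have h2 : invFact (d + 1 - 2 * ↑(b + 1)) =
      ((d - 2 * b : ℤ) : ℚ) * ((d + 1 - 2 * b : ℤ) : ℚ) * invFact (d + 1 - 2 * b) := by
    rw [show (d + 1 - 2 * ↑(b + 1) : ℤ) = d - 2 * b - 1 by push_cast; ring, invFact_sub_one, h1,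
      mul_assoc]
  have h3 : invFact (b - 1) = b * invFact b := invFact_sub_one b
  have hmQ : (m : ℚ) = 2 * d - b := by rw [eq_sub_iff_add_eq]; exact_mod_cast hm.symm
  rw [wzCert, wzCert, trinom_of_add_eq (m := m + 2) (by push_cast; omega),
    trinom_of_add_eq (m := m) (by omega), trinom_of_add_eq (m := m) (by push_cast; omega),
    trinom_of_add_eq (m := m + 1) (by push_cast; omega), h1, h2, h3]
  simp only [Nat.cast_add, Nat.cast_one, add_sub_cancel_right, Nat.factorial_succ]
  push_cast
  rw [hmQ]
  field_simp
  ring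

lemma Ppoly_diag_succ (d : ℕ) :
    (d + 1) * Ppoly (d + 1) (d + 1) (-1 / 3) = (3 * d + 2) * Ppoly d d (-1 / 3) := by
  set N := (d + 1) / 2 + 1
  have hN : wzCert d N = 0 := by
    rw [wzCert, trinom_of_neg_right _ _ (by omega), mul_zero, zero_mul]
  have h0 : wzCert d 0 = 0 := by
    rw [wzCert, trinom_of_neg_left _ _ (by omega), mul_zero, zero_mul]
  rw [← sub_eq_zero, Ppoly_eq_sum_trinom _ _ N (by omega), Ppoly_eq_sum_trinom _ _ N (by omega),
    mul_sum, mul_sum, ← sum_sub_distrib,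
    sum_congr rfl fun b hb => wzCert_succ_sub d b (by rw [mem_range] at hb; omega),
    sum_range_sub, hN, h0, sub_zero]

lemma Ppoly_diag_neg_third (d : ℕ) :
    Ppoly d d (-1 / 3) = 3 ^ d * ∏ k ∈ range d, (1 - 1 / (3 * ((k : ℚ) + 1))) := by
  induction d with
  | zero => norm_num [Ppoly, mult3]
  | succ d ih =>
    rw [prod_range_succ, pow_succ, mul_mul_mul_comm, ← ih,
      show 3 * (1 - 1 / (3 * ((d : ℚ) + 1))) = (3 * d + 2) / (d + 1) by field_simp; ring,
      mul_div_assoc', eq_div_iff (by positivity)]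
    linear_combination Ppoly_diag_succ d

theorem stmt0 (d : ℕ) :
    Ppoly d d (-1/3) = 3 ^ d * ∏ k ∈ Finset.range d, (1 - 1 / (3 * ((k : ℚ) + 1))) ∧
      Ppoly d d (-1/3) ≠ 0 := by
  refine ⟨Ppoly_diag_neg_third d, ?_⟩
  rw [Ppoly_diag_neg_third]
  refine mul_ne_zero (by positivity) (prod_ne_zero_iff.mpr fun k _ => sub_ne_zero.mpr ?_)
  exact ((div_lt_one (by positivity)).mpr (by linarith [k.cast_nonneg (α := ℚ)])).ne'
end

section
/- For every nonnegative integer d, the value p_d(-1/4) = P_{d,d}(-1/4) equals (3/4)^d \prod_{k=1}^{d} (9k^2 - 1)/(k(2k+1)); in particular P_{d,d}(-1/4) \neq 0. -/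
/-!
For fixed `z`, `∑ₙ Ppoly k n z xⁿ = (1 - x - z x²)^-(k+1)`, whose coefficientwise form is the
recursion `P_{k+1,n+2} = P_{k,n+2} + P_{k+1,n+1} + z P_{k+1,n}` coming from the three-term Pascal
rule for multinomial coefficients. At `z = -1/4` the generating function is `(1 - x/2)^-(2k+2)`,
so `P_{k,n}(-1/4) = C(n+2k+1, 2k+1) / 2^n`, which is verified against that recursion. Hence
`p_d(-1/4) = C(3d+1, 2d+1) / 2^d`, and the ratio of consecutive values is `3/4` times the `d`-th
factor of the product.
-/

open Finset

lemma mult3_eq_choose_mul_choose (a b c : ℕ) :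
    mult3 a b c = (a + b + c).choose a * (b + c).choose b := by
  have hbc := Nat.add_choose_mul_factorial_mul_factorial c b
  have habc := Nat.add_choose_mul_factorial_mul_factorial (b + c) a
  rw [add_comm c b] at hbc
  rw [add_comm (b + c) a, ← add_assoc] at habc
  refine Nat.div_eq_of_eq_mul_left (by positivity) ?_
  rw [← habc, ← hbc]
  ring

/-- The coefficient of `z ^ b` in `Ppoly k n z`, written so that it vanishes for `n < 2 * b`. -/
def pCoeff (k n b : ℕ) : ℕ := (k + (n - b)).choose k * (n - b).choose b

lemma mult3_eq_pCoeff {k n b : ℕ} (h : 2 * b ≤ n) : mult3 k b (n - 2 * b) = pCoeff k n b := by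
  rw [mult3_eq_choose_mul_choose, pCoeff, add_assoc, show b + (n - 2 * b) = n - b by omega]

lemma pCoeff_eq_zero {k n b : ℕ} (h : n < 2 * b) : pCoeff k n b = 0 := by
  rw [pCoeff, Nat.choose_eq_zero_of_lt (show n - b < b by omega), mul_zero]

lemma pCoeff_zero_right (k n : ℕ) : pCoeff k n 0 = (k + n).choose k := by
  simp [pCoeff]

lemma Ppoly_eq_sum_range {k n N : ℕ} (hN : n / 2 < N) (z : ℚ) :
    Ppoly k n z = ∑ b ∈ range N, (pCoeff k n b : ℚ) * z ^ b := by
  have hcoeff : Ppoly k n z = ∑ b ∈ range (n / 2 + 1), (pCoeff k n b : ℚ) * z ^ b :=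
    sum_congr rfl fun b hb => by
      rw [mult3_eq_pCoeff (by have := mem_range.1 hb; omega)]
  rw [hcoeff, eventually_constant_sum (fun b hb => ?_) hN]
  rw [pCoeff_eq_zero (by omega), Nat.cast_zero, zero_mul]

lemma Ppoly_zero_right (k : ℕ) (z : ℚ) : Ppoly k 0 z = 1 := by
  simp [Ppoly_eq_sum_range (show 0 / 2 < 1 by decide), pCoeff]

lemma Ppoly_one_right (k : ℕ) (z : ℚ) : Ppoly k 1 z = k + 1 := by
  simp [Ppoly_eq_sum_range (show 1 / 2 < 1 by decide), pCoeff]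

lemma pCoeff_succ_succ_succ (k n b : ℕ) :
    pCoeff (k + 1) (n + 2) (b + 1) =
      pCoeff k (n + 2) (b + 1) + pCoeff (k + 1) (n + 1) (b + 1) + pCoeff (k + 1) n b := by
  rcases lt_or_ge n (2 * b) with h | h
  · simp only [pCoeff_eq_zero (show n + 2 < 2 * (b + 1) by omega),
      pCoeff_eq_zero (show n + 1 < 2 * (b + 1) by omega), pCoeff_eq_zero h]
  obtain ⟨m, rfl⟩ : ∃ m, n = b + m := ⟨n - b, by omega⟩
  simp only [pCoeff, show b + m + 2 - (b + 1) = m + 1 by omega,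
    show b + m + 1 - (b + 1) = m by omega, show b + m - b = m by omega]
  rw [show k + 1 + (m + 1) = (k + m + 1) + 1 by ring, Nat.choose_succ_succ (k + m + 1),
    Nat.choose_succ_succ m b, show k + (m + 1) = k + m + 1 by ring,
    show k + 1 + m = k + m + 1 by ring]
  ring

lemma pCoeff_zero_succ_succ_succ (n b : ℕ) :
    pCoeff 0 (n + 2) (b + 1) = pCoeff 0 (n + 1) (b + 1) + pCoeff 0 n b := by
  rcases lt_or_ge n (2 * b) with h | h
  · simp only [pCoeff_eq_zero (show n + 2 < 2 * (b + 1) by omega),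
      pCoeff_eq_zero (show n + 1 < 2 * (b + 1) by omega), pCoeff_eq_zero h]
  obtain ⟨m, rfl⟩ : ∃ m, n = b + m := ⟨n - b, by omega⟩
  simp only [pCoeff, show b + m + 2 - (b + 1) = m + 1 by omega,
    show b + m + 1 - (b + 1) = m by omega, show b + m - b = m by omega, Nat.choose_zero_right,
    one_mul, Nat.choose_succ_succ m b, add_comm]

lemma Ppoly_succ_succ_succ (k n : ℕ) (z : ℚ) :
    Ppoly (k + 1) (n + 2) z =
      Ppoly k (n + 2) z + Ppoly (k + 1) (n + 1) z + z * Ppoly (k + 1) n z := by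
  have hN : n / 2 < n / 2 + 1 := Nat.lt_succ_self _
  rw [Ppoly_eq_sum_range (show (n + 2) / 2 < n / 2 + 2 by omega),
    Ppoly_eq_sum_range (show (n + 2) / 2 < n / 2 + 2 by omega),
    Ppoly_eq_sum_range (show (n + 1) / 2 < n / 2 + 2 by omega), Ppoly_eq_sum_range hN,
    sum_range_succ' _ (n / 2 + 1), sum_range_succ' _ (n / 2 + 1), sum_range_succ' _ (n / 2 + 1),
    mul_comm z, sum_mul]
  simp only [pCoeff_succ_succ_succ, pCoeff_zero_right, Nat.cast_add, add_mul, sum_add_distrib,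
    pow_succ, mul_assoc]
  rw [show k + 1 + (n + 2) = (k + n + 2) + 1 by ring, Nat.choose_succ_succ,
    show k + 1 + (n + 1) = k + n + 2 by ring, show k + (n + 2) = k + n + 2 by ring, Nat.cast_add]
  ring

lemma Ppoly_zero_succ_succ (n : ℕ) (z : ℚ) :
    Ppoly 0 (n + 2) z = Ppoly 0 (n + 1) z + z * Ppoly 0 n z := by
  have hN : n / 2 < n / 2 + 1 := Nat.lt_succ_self _
  rw [Ppoly_eq_sum_range (show (n + 2) / 2 < n / 2 + 2 by omega),
    Ppoly_eq_sum_range (show (n + 1) / 2 < n / 2 + 2 by omega), Ppoly_eq_sum_range hN,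
    sum_range_succ' _ (n / 2 + 1), sum_range_succ' _ (n / 2 + 1), mul_comm z, sum_mul]
  simp only [pCoeff_zero_succ_succ_succ, pCoeff_zero_right, Nat.cast_add, add_mul, sum_add_distrib,
    Nat.choose_zero_right, pow_succ, mul_assoc]
  ring

lemma add_two_choose_add_two_add_choose (N j : ℕ) :
    (N + 2).choose (j + 2) + N.choose (j + 2) = N.choose j + 2 * (N + 1).choose (j + 2) := by
  have h₁ : (N + 2).choose (j + 2) = (N + 1).choose (j + 1) + (N + 1).choose (j + 2) :=
    Nat.choose_succ_succ _ _
  have h₂ : (N + 1).choose (j + 1) = N.choose j + N.choose (j + 1) := Nat.choose_succ_succ _ _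
  have h₃ : (N + 1).choose (j + 2) = N.choose (j + 1) + N.choose (j + 2) :=
    Nat.choose_succ_succ _ _
  omega

theorem Ppoly_neg_one_fourth (k n : ℕ) :
    Ppoly k n (-1/4) = ((n + 2 * k + 1).choose (2 * k + 1) : ℚ) / 2 ^ n := by
  induction n using Nat.twoStepInduction generalizing k with
  | zero => simp [Ppoly_zero_right]
  | one =>
    rw [Ppoly_one_right, show 1 + 2 * k + 1 = 2 * k + 1 + 1 by ring, Nat.choose_succ_self_right]
    push_cast
    ring
  | more n ih₀ ih₁ =>
    induction k with
    | zero =>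
      rw [Ppoly_zero_succ_succ, ih₀, ih₁]
      simp only [mul_zero, zero_add, add_zero, Nat.choose_one_right]
      push_cast
      ring
    | succ k ihk =>
      have key := add_two_choose_add_two_add_choose (n + 2 * k + 3) (2 * k + 1)
      rw [Ppoly_succ_succ_succ, ihk, ih₀, ih₁,
        show n + 2 + 2 * (k + 1) + 1 = n + 2 * k + 3 + 2 by ring,
        show n + 2 + 2 * k + 1 = n + 2 * k + 3 by ring,
        show n + 1 + 2 * (k + 1) + 1 = n + 2 * k + 3 + 1 by ring,
        show n + 2 * (k + 1) + 1 = n + 2 * k + 3 by ring,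
        show 2 * (k + 1) + 1 = 2 * k + 1 + 2 by ring]
      qify at key
      linear_combination -key / 2 ^ (n + 2)

lemma choose_three_mul_add_four_mul (d : ℕ) :
    (3 * d + 4).choose (2 * d + 3) * ((d + 1) * (2 * d + 2) * (2 * d + 3)) =
      (3 * d + 1).choose (2 * d + 1) * ((3 * d + 2) * (3 * d + 3) * (3 * d + 4)) := by
  have h₁ : (3 * d + 2) * (3 * d + 1).choose (2 * d + 1) =
      (3 * d + 2).choose (2 * d + 2) * (2 * d + 2) := Nat.add_one_mul_choose_eq _ _
  have h₂ : (3 * d + 3) * (3 * d + 2).choose (2 * d + 2) =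
      (3 * d + 3).choose (2 * d + 3) * (2 * d + 3) := Nat.add_one_mul_choose_eq _ _
  have h₃ : (3 * d + 3).choose (2 * d + 3) * (3 * d + 4) =
      (3 * d + 4).choose (2 * d + 3) * (d + 1) := by
    rw [Nat.choose_mul_succ_eq, show 3 * d + 3 + 1 - (2 * d + 3) = d + 1 by omega]
  qify at h₁ h₂ h₃ ⊢
  linear_combination -(2 * d + 2) * (2 * d + 3) * h₃ - (3 * d + 4) * (2 * d + 2) * h₂ -
    (3 * d + 3) * (3 * d + 4) * h₁

lemma prod_eq_choose_div_two_pow (d : ℕ) :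
    (3/4 : ℚ) ^ d * ∏ k ∈ range d,
        (9 * ((k : ℚ) + 1) ^ 2 - 1) / (((k : ℚ) + 1) * (2 * ((k : ℚ) + 1) + 1)) =
      ((3 * d + 1).choose (2 * d + 1) : ℚ) / 2 ^ d := by
  induction d with
  | zero => simp
  | succ d ih =>
    have step := choose_three_mul_add_four_mul d
    qify at step
    rw [prod_range_succ, pow_succ, mul_mul_mul_comm, ih,
      show 3 * (d + 1) + 1 = 3 * d + 4 by ring, show 2 * (d + 1) + 1 = 2 * d + 3 by ring,
      eq_div_of_mul_eq (by positivity) step]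
    field_simp
    ring

theorem stmt1 (d : ℕ) :
    Ppoly d d (-1/4) =
        (3/4) ^ d * ∏ k ∈ Finset.range d,
          (9 * ((k : ℚ) + 1) ^ 2 - 1) / (((k : ℚ) + 1) * (2 * ((k : ℚ) + 1) + 1)) ∧
      Ppoly d d (-1/4) ≠ 0 := by
  have hP : Ppoly d d (-1/4) = ((3 * d + 1).choose (2 * d + 1) : ℚ) / 2 ^ d := by
    rw [Ppoly_neg_one_fourth, show d + 2 * d + 1 = 3 * d + 1 by ring]
  have hchoose : 0 < (3 * d + 1).choose (2 * d + 1) := Nat.choose_pos (by omega)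
  refine ⟨by rw [hP, prod_eq_choose_div_two_pow], by rw [hP]; positivity⟩
end

section
/- For every d \geq 2, every complex root \lambda of p_d(z) = P_{d,d}(z) satisfies \lambda \notin \{0, -1/3, -1/4\}. -/
/-- `P k n z = ∑_{b=0}^{⌊n/2⌋} multinomial(k+n-b; k, b, n-2b) z^b` evaluated at `z : ℂ`. -/
noncomputable def Pval (k n : ℕ) (z : ℂ) : ℂ :=
  ∑ b ∈ Finset.range (n / 2 + 1), (mult3 k b (n - 2 * b) : ℂ) * z ^ b

/-!
At `z = -1/3` and `z = -1/4` the sequence `p_d(z)` satisfies the first-order recurrences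
`(d+1) p_{d+1} = (3d+2) p_d` and `4(d+1)(2d+3) p_{d+1} = 3(3d+2)(3d+4) p_d`; as `p_0 = 1`, it never
vanishes. The recurrences come from creative telescoping (Zeilberger): writing `M` for the
multinomial coefficient, the summand of `α p_{d+1}(z) - β p_d(z)` is `G(b+1) - G(b)` with
`G(b) = g(b) b M(d, b, d+1-2b) z^b`, and after division by `z^b` this is a linear combination of the
contiguity relations `(a+1) M(a+1, b, c) = (a+b+c+1) M(a, b, c)` (and their permutations).
At `z = 0` only the term `p_d(0) = binom(2d, d)` survives.
-/

open Finset Nat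

lemma factorial_mul_factorial_mul_factorial_dvd (a b c : ℕ) : a ! * b ! * c ! ∣ (a + b + c)! := by
  rw [mul_assoc, add_assoc]
  exact (Nat.mul_dvd_mul_left _ (factorial_mul_factorial_dvd_factorial_add b c)).trans
    (factorial_mul_factorial_dvd_factorial_add a (b + c))

lemma mult3_pos (a b c : ℕ) : 0 < mult3 a b c :=
  Nat.div_pos (Nat.le_of_dvd (factorial_pos _) (factorial_mul_factorial_mul_factorial_dvd a b c))
    (by positivity)

lemma cast_mult3 (a b c : ℕ) : (mult3 a b c : ℚ) = (a + b + c)! / (a ! * b ! * c !) := by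
  rw [mult3, Nat.cast_div (factorial_mul_factorial_mul_factorial_dvd a b c) (by positivity)]
  push_cast; rfl

lemma succ_mul_mult3_succ_left (a b c : ℕ) :
    (a + 1) * mult3 (a + 1) b c = (a + b + c + 1) * mult3 a b c := by
  qify
  rw [cast_mult3, cast_mult3, show a + 1 + b + c = a + b + c + 1 by ring]
  push_cast [factorial_succ]
  field_simp

lemma succ_mul_mult3_succ_mid (a b c : ℕ) :
    (b + 1) * mult3 a (b + 1) c = (a + b + c + 1) * mult3 a b c := by
  qify
  rw [cast_mult3, cast_mult3, show a + (b + 1) + c = a + b + c + 1 by ring]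
  push_cast [factorial_succ]
  field_simp

lemma succ_mul_mult3_succ_right (a b c : ℕ) :
    (c + 1) * mult3 a b (c + 1) = (a + b + c + 1) * mult3 a b c := by
  qify
  rw [cast_mult3, cast_mult3, show a + b + (c + 1) = a + b + c + 1 by ring]
  push_cast [factorial_succ]
  field_simp

/-- Extending `mult3` by zero to negative last arguments makes the contiguity relations below hold
without boundary cases. -/
def mult3Z (a b : ℕ) (c : ℤ) : ℤ := if 0 ≤ c then mult3 a b c.toNat else 0

lemma mult3Z_natCast (a b c : ℕ) : mult3Z a b c = mult3 a b c := by simp [mult3Z]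

lemma mult3Z_of_neg {a b : ℕ} {c : ℤ} (hc : c < 0) : mult3Z a b c = 0 := by
  simp [mult3Z, not_le.2 hc]

lemma succ_mul_mult3Z_succ_left (a b : ℕ) (c : ℤ) :
    (a + 1) * mult3Z (a + 1) b c = (a + b + c + 1) * mult3Z a b c := by
  rcases le_or_gt 0 c with hc | hc
  · lift c to ℕ using hc
    simp only [mult3Z_natCast]; exact_mod_cast succ_mul_mult3_succ_left a b c
  · simp [mult3Z_of_neg hc]

lemma succ_mul_mult3Z_succ_mid (a b : ℕ) (c : ℤ) :
    (b + 1) * mult3Z a (b + 1) c = (a + b + c + 1) * mult3Z a b c := by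
  rcases le_or_gt 0 c with hc | hc
  · lift c to ℕ using hc
    simp only [mult3Z_natCast]; exact_mod_cast succ_mul_mult3_succ_mid a b c
  · simp [mult3Z_of_neg hc]

lemma succ_mul_mult3Z_succ_right (a b : ℕ) (c : ℤ) :
    (c + 1) * mult3Z a b (c + 1) = (a + b + c + 1) * mult3Z a b c := by
  rcases lt_trichotomy c (-1) with hc | rfl | hc
  · simp [mult3Z_of_neg (by omega : c < 0), mult3Z_of_neg (by omega : c + 1 < 0)]
  · simp [mult3Z_of_neg (by omega : (-1 : ℤ) < 0)]
  · lift c to ℕ using (by omega)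
    have := succ_mul_mult3_succ_right a b c
    simp only [← Nat.cast_succ, mult3Z_natCast]; exact_mod_cast this

lemma mult3Z_certificate_neg_one_third (d b : ℕ) :
    (d + 1) * mult3Z (d + 1) b (d + 1 - 2 * b) - (3 * d + 2) * mult3Z d b (d - 2 * b)
      = (b + 1) * mult3Z d (b + 1) (d - 1 - 2 * b) + 3 * b * mult3Z d b (d + 1 - 2 * b) := by
  have h₁ := succ_mul_mult3Z_succ_left d b (d + 1 - 2 * b)
  have h₂ := succ_mul_mult3Z_succ_mid d b (d - 1 - 2 * b)
  have h₃ := succ_mul_mult3Z_succ_right d b (d - 1 - 2 * b)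
  have h₄ := succ_mul_mult3Z_succ_right d b (d - 2 * b)
  rw [show (d : ℤ) - 1 - 2 * b + 1 = d - 2 * b by ring] at h₃
  rw [show (d : ℤ) - 2 * b + 1 = d + 1 - 2 * b by ring] at h₄
  linear_combination h₁ - h₂ + h₃ + 2 * h₄

lemma mult3Z_certificate_neg_one_fourth (d b : ℕ) :
    4 * (d + 1) * (2 * d + 3) * mult3Z (d + 1) b (d + 1 - 2 * b)
        - 3 * (3 * d + 2) * (3 * d + 4) * mult3Z d b (d - 2 * b)
      = (5 * d + 2 * b + 10) * (b + 1) * mult3Z d (b + 1) (d - 1 - 2 * b)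
        + 4 * (5 * d + 2 * b + 8) * b * mult3Z d b (d + 1 - 2 * b) := by
  have h₁ := succ_mul_mult3Z_succ_left d b (d + 1 - 2 * b)
  have h₂ := succ_mul_mult3Z_succ_mid d b (d - 1 - 2 * b)
  have h₃ := succ_mul_mult3Z_succ_right d b (d - 1 - 2 * b)
  have h₄ := succ_mul_mult3Z_succ_right d b (d - 2 * b)
  rw [show (d : ℤ) - 1 - 2 * b + 1 = d - 2 * b by ring] at h₃
  rw [show (d : ℤ) - 2 * b + 1 = d + 1 - 2 * b by ring] at h₄
  linear_combination 4 * (2 * (d : ℤ) + 3) * h₁ - (5 * (d : ℤ) + 2 * b + 10) * (h₂ - h₃)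
    + 4 * (4 * (d : ℤ) + b + 6) * h₄

lemma Pval_eq_sum_mult3Z (d N : ℕ) (hN : d / 2 < N) (z : ℂ) :
    Pval d d z = ∑ b ∈ range N, (mult3Z d b (d - 2 * b) : ℂ) * z ^ b := by
  rw [Pval, ← sum_subset (range_subset_range.2 hN)]
  · refine sum_congr rfl fun b hb => ?_
    rw [show (d : ℤ) - 2 * b = (d - 2 * b : ℕ) by rw [mem_range] at hb; omega, mult3Z_natCast,
      Int.cast_natCast]
  · intro b _ hb
    rw [mem_range] at hb
    rw [mult3Z_of_neg (by omega), Int.cast_zero, zero_mul]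

lemma mul_Pval_succ_eq_of_certificate (d : ℕ) (z α β : ℂ) (g : ℕ → ℂ)
    (hg : ∀ b : ℕ, α * mult3Z (d + 1) b (d + 1 - 2 * b) - β * mult3Z d b (d - 2 * b)
      = z * g (b + 1) * (b + 1) * mult3Z d (b + 1) (d - 1 - 2 * b)
        - g b * b * mult3Z d b (d + 1 - 2 * b)) :
    α * Pval (d + 1) (d + 1) z = β * Pval d d z := by
  set G : ℕ → ℂ := fun b => g b * b * mult3Z d b (d + 1 - 2 * b) * z ^ b
  have hG : ∀ b, (α * mult3Z (d + 1) b (d + 1 - 2 * b) - β * mult3Z d b (d - 2 * b)) * z ^ b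
      = G (b + 1) - G b := by
    intro b
    simp only [hg, G]
    rw [show (d : ℤ) + 1 - 2 * (b + 1 : ℕ) = d - 1 - 2 * b by push_cast; ring]
    push_cast; ring
  rw [Pval_eq_sum_mult3Z (d + 1) (d / 2 + 2) (by omega), Pval_eq_sum_mult3Z d (d / 2 + 2) (by omega),
    ← sub_eq_zero, mul_sum, mul_sum, ← sum_sub_distrib]
  push_cast
  simp_rw [← mul_assoc, ← sub_mul, hG]
  have hGN : G (d / 2 + 2) = 0 := by simp only [G]; rw [mult3Z_of_neg (by omega)]; simp
  rw [sum_range_sub, hGN]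
  simp [G]

lemma Pval_succ_neg_one_third (d : ℕ) :
    ((d : ℂ) + 1) * Pval (d + 1) (d + 1) (-1 / 3) = (3 * d + 2) * Pval d d (-1 / 3) := by
  refine mul_Pval_succ_eq_of_certificate d _ _ _ (fun _ => -3) fun b => ?_
  have h := congrArg (Int.cast : ℤ → ℂ) (mult3Z_certificate_neg_one_third d b)
  push_cast at h
  linear_combination h

lemma Pval_succ_neg_one_fourth (d : ℕ) :
    4 * ((d : ℂ) + 1) * (2 * d + 3) * Pval (d + 1) (d + 1) (-1 / 4)
      = 3 * (3 * d + 2) * (3 * d + 4) * Pval d d (-1 / 4) := by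
  refine mul_Pval_succ_eq_of_certificate d _ _ _ (fun b => -4 * (5 * d + 2 * b + 8)) fun b => ?_
  have h := congrArg (Int.cast : ℤ → ℂ) (mult3Z_certificate_neg_one_fourth d b)
  push_cast at h ⊢
  linear_combination h

lemma ne_zero_of_mul_succ_eq_mul {M₀ : Type*} [MulZeroClass M₀] [NoZeroDivisors M₀]
    {p α β : ℕ → M₀} (h₀ : p 0 ≠ 0) (hβ : ∀ d, β d ≠ 0)
    (hp : ∀ d, α d * p (d + 1) = β d * p d) (d : ℕ) : p d ≠ 0 := by
  induction d with
  | zero => exact h₀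
  | succ d ih =>
    intro h
    have : β d * p d = 0 := by rw [← hp, h, mul_zero]
    exact (mul_eq_zero.1 this).elim (hβ d) ih

lemma Pval_zero_zero_eq_one (z : ℂ) : Pval 0 0 z = 1 := by
  simp [Pval, mult3]

lemma Pval_diag_zero_ne_zero (d : ℕ) : Pval d d 0 ≠ 0 := by
  rw [Pval, sum_eq_single 0 (fun b _ hb => by simp [hb]) (by simp)]
  simpa using (mult3_pos d 0 d).ne'

theorem stmt6_general (d : ℕ) (lam : ℂ) (h0 : Pval d d lam = 0) :
    lam ≠ 0 ∧ lam ≠ -1/3 ∧ lam ≠ -1/4 := by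
  refine ⟨?_, ?_, ?_⟩ <;> rintro rfl
  · exact Pval_diag_zero_ne_zero d h0
  · refine ne_zero_of_mul_succ_eq_mul (p := fun n => Pval n n (-1 / 3)) (by simp [Pval_zero_zero_eq_one])
      (fun n => ?_) Pval_succ_neg_one_third d h0
    exact_mod_cast (by omega : 3 * n + 2 ≠ 0)
  · refine ne_zero_of_mul_succ_eq_mul (p := fun n => Pval n n (-1 / 4)) (by simp [Pval_zero_zero_eq_one])
      (fun n => ?_) Pval_succ_neg_one_fourth d h0
    exact_mod_cast (by positivity : 3 * (3 * n + 2) * (3 * n + 4) ≠ 0)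

/-- Every complex root of `p_d` avoids `0`, `-1/3` and `-1/4`. -/
theorem stmt6 (d : ℕ) (hd : 2 ≤ d) (lam : ℂ) (h0 : Pval d d lam = 0) :
    lam ≠ 0 ∧ lam ≠ -1/3 ∧ lam ≠ -1/4 :=
  stmt6_general d lam h0
end

section
/- Let R be a commutative \mathbb{Q}-algebra and let f(Y) = Y + \sum_{j \geq 1} f_j Y^{j+1} \in R[[Y]] be a formal power series with compositional inverse h(Y) = Y + \sum_{j \geq 1} h_j Y^{j+1} (so f(h(Y)) = Y). Then for every j \geq 1, h_j = \frac{1}{j+1} \sum_{\mathbf{a} \cdot \mathbb{N} = j} (-1)^{|\mathbf{a}|} \binom{|\mathbf{a}| + j}{a_1, \ldots, a_j, j} f_1^{a_1} \cdots f_j^{a_j}, where the sum is over tuples \mathbf{a} = (a_1, \ldots, a_j) of nonnegative integers with a_1 + 2a_2 + \cdots + j a_j = j and |\mathbf{a}| = a_1 + \cdots + a_j. -/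
/-!
Since `f` has a compositional inverse, `f(h(Y)) = Y` also gives `h(f(Y)) = Y`, and differentiating
yields `h'(f) · f' = 1`. Write `f = Y w` and `W = w⁻¹`, multiply by `W^(j+1)` and take the
coefficient of `Y^j`: the `k`-th term of `h'(f) = ∑ (k+1) h_k f^k` contributes
`[Y^(j-k)] f' W^(j-k+1)`, and `f' W^(m+1) = W^m - Y (W^m)' / m` has vanishing `Y^m`-coefficient
for `m ≥ 1`, so only `k = j` survives and `(j+1) h_j = [Y^j] W^(j+1)`. Finally, with `w = 1 + g`,
`W^(j+1) = ∑_k C(j+k, j) (-g)^k`, the multinomial theorem expands `[Y^j] g^k`, and the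
coefficients combine as `C(j+|a|, j) · (|a| choose a) = (|a|+j choose a, j)`.
-/

open PowerSeries

/-- Composition `f(g(Y))` of formal power series, valid when `g` has zero constant term
(then `g^k` has order at least `k`, so the sum below computes the composition). -/
noncomputable def psComp {R : Type*} [CommRing R] (f g : PowerSeries R) : PowerSeries R :=
  PowerSeries.mk fun n => ∑ k ∈ Finset.range (n + 1), coeff k f * coeff n (g ^ k)

/-- The multinomial coefficient `(∑ aᵢ + s)! / (∏ aᵢ! * s!)`. -/
def multinom {m : ℕ} (a : Fin m → ℕ) (s : ℕ) : ℕ :=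
  (∑ i, a i + s).factorial / ((∏ i, (a i).factorial) * s.factorial)

open Finset

theorem multinom_eq_choose_mul_multinomial {m : ℕ} (a : Fin m → ℕ) (s : ℕ) :
    multinom a s = (s + ∑ i, a i).choose s * Nat.multinomial univ a := by
  refine Nat.div_eq_of_eq_mul_left (by positivity) ?_
  rw [add_comm, ← Nat.choose_mul_factorial_mul_factorial (Nat.le_add_right s _),
    Nat.add_sub_cancel_left, ← Nat.multinomial_spec]
  ring

theorem sum_range_sum_filter_piAntidiag {M : Type*} [AddCommMonoid M] (m n : ℕ)
    (G : (Fin m → ℕ) → M) :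
    ∑ k ∈ range (n + 1), ∑ a ∈ (piAntidiag univ k).filter
        (fun a => ∑ i : Fin m, ((i : ℕ) + 1) * a i = n), G a =
      ∑ a ∈ (Fintype.piFinset fun _ : Fin m => range (n + 1)).filter
        (fun a => ∑ i : Fin m, ((i : ℕ) + 1) * a i = n), G a := by
  have sum_le : ∀ a : Fin m → ℕ, ∑ i, a i ≤ ∑ i : Fin m, ((i : ℕ) + 1) * a i :=
    fun a => sum_le_sum fun i _ => Nat.le_mul_of_pos_left _ i.val.succ_pos
  rw [← sum_fiberwise_of_maps_to (g := fun a : Fin m → ℕ => ∑ i, a i)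
    (t := range (n + 1))]
  · refine sum_congr rfl fun k _ => sum_congr ?_ fun _ _ => rfl
    ext a
    simp only [mem_filter, mem_piAntidiag, Fintype.mem_piFinset, mem_range,
      mem_univ, implies_true, and_true]
    constructor
    · rintro ⟨hk, hw⟩
      refine ⟨⟨fun i => ?_, hw⟩, hk⟩
      have := single_le_sum (fun _ _ => Nat.zero_le _) (mem_univ i) (f := a)
      linarith [sum_le a]
    · rintro ⟨⟨-, hw⟩, hk⟩
      exact ⟨hk, hw⟩
  · intro a ha
    rw [mem_filter] at ha
    exact mem_range.2 (Nat.lt_succ_of_le (ha.2 ▸ sum_le a))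

namespace PowerSeries

variable {R : Type*} [CommRing R]

theorem coeff_pow_eq_zero_of_lt {g : R⟦X⟧} (hg : constantCoeff g = 0) {n k : ℕ} (h : n < k) :
    coeff n (g ^ k) = 0 :=
  X_pow_dvd_iff.1 (pow_dvd_pow_of_dvd (X_dvd_iff.2 hg) k) n h

theorem coeff_subst_eq_sum_range {g : R⟦X⟧} (hg : constantCoeff g = 0) (F : R⟦X⟧) {n N : ℕ}
    (hN : n < N) : coeff n (F.subst g) = ∑ k ∈ range N, coeff k F * coeff n (g ^ k) := by
  rw [coeff_subst' (HasSubst.of_constantCoeff_zero' hg)]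
  refine finsum_eq_sum_of_support_subset _ fun k hk => mem_range.2 ?_
  by_contra! hNk
  exact hk (by simp only [coeff_pow_eq_zero_of_lt hg (hN.trans_le hNk), smul_zero])

theorem coeff_subst_mul {g : R⟦X⟧} (hg : constantCoeff g = 0) (F u : R⟦X⟧) (n : ℕ) :
    coeff n (F.subst g * u) = ∑ k ∈ range (n + 1), coeff k F * coeff n (g ^ k * u) := by
  simp_rw [coeff_mul, mul_sum]
  rw [sum_comm]
  refine sum_congr rfl fun p hp => ?_
  rw [coeff_subst_eq_sum_range hg F (Nat.antidiagonal.fst_lt hp), sum_mul]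
  exact sum_congr rfl fun k _ => mul_assoc _ _ _

theorem psComp_eq_subst {g : R⟦X⟧} (hg : constantCoeff g = 0) (F : R⟦X⟧) :
    psComp F g = F.subst g := by
  ext n
  rw [coeff_subst_eq_sum_range hg F n.lt_succ_self, psComp, coeff_mk]

theorem subst_eq_X_of_subst_eq_X {f g : R⟦X⟧} (hf0 : constantCoeff f = 0)
    (hf1 : IsUnit (coeff 1 f)) (hg : HasSubst g) (hfg : f.subst g = X) : g.subst f = X := by
  have hf : HasSubst f := HasSubst.of_constantCoeff_zero' hf0
  have hg_eq : g = f.substInvOfIsUnit hf1 := by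
    calc g = subst g (X : R⟦X⟧) := (subst_X hg).symm
      _ = subst g ((f.substInvOfIsUnit hf1).subst f) := by
        rw [subst_substInvOfIsUnit_left f hf0 hf1]
      _ = f.substInvOfIsUnit hf1 := by rw [subst_comp_subst_apply hf hg, hfg, X_subst]
  rw [hg_eq, subst_substInvOfIsUnit_left f hf0 hf1]

theorem coeff_X_mul_derivative (P : R⟦X⟧) (n : ℕ) :
    coeff n (X * d⁄dX R P) = n * coeff n P := by
  cases n with
  | zero => simp
  | succ n => rw [coeff_succ_X_mul, coeff_derivative, mul_comm]; push_cast; ring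

theorem derivative_X_mul (w : R⟦X⟧) : d⁄dX R (X * w) = w + X * d⁄dX R w := by
  rw [Derivation.leibniz, derivative_X, smul_eq_mul, smul_eq_mul, mul_one, add_comm]

theorem derivative_eq_neg_sq_mul_derivative {w W : R⟦X⟧} (hwW : w * W = 1) :
    d⁄dX R W = -(W ^ 2 * d⁄dX R w) := by
  have h := congrArg (d⁄dX R) hwW
  rw [Derivation.leibniz, Derivation.map_one_eq_zero, smul_eq_mul, smul_eq_mul] at h
  linear_combination W * h - d⁄dX R W * hwW

section RatAlgebra

variable [Algebra ℚ R]

theorem coeff_derivative_X_mul_mul_pow {w W : R⟦X⟧} (hwW : w * W = 1) (m : ℕ) :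
    coeff m (d⁄dX R (X * w) * W ^ (m + 1)) = if m = 0 then 1 else 0 := by
  rcases m with _ | n
  · simpa [derivative_X_mul] using congrArg constantCoeff hwW
  · -- `(X w)' W^(m+1) = W^m - X (W^m)' / m`, and `X P'` has `m`-th coefficient `m P_m`.
    have key : ((n + 1 : ℕ) : R⟦X⟧) * (d⁄dX R (X * w) * W ^ (n + 2)) =
        ((n + 1 : ℕ) : R⟦X⟧) * W ^ (n + 1) - X * d⁄dX R (W ^ (n + 1)) := by
      rw [Derivation.leibniz_pow, derivative_eq_neg_sq_mul_derivative hwW, derivative_X_mul,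
        smul_eq_mul, nsmul_eq_mul, Nat.add_sub_cancel]
      linear_combination (((n + 1 : ℕ) : R⟦X⟧) * W ^ (n + 1)) * hwW
    have hunit : IsUnit ((n + 1 : ℕ) : R) := by
      simpa using (IsUnit.mk0 ((n + 1 : ℕ) : ℚ) (by positivity)).map (algebraMap ℚ R)
    have := congrArg (coeff (n + 1)) key
    rw [map_sub, coeff_X_mul_derivative, ← map_natCast (C (R := R)), coeff_C_mul,
      coeff_C_mul, sub_self] at this
    simpa using (hunit.mul_right_eq_zero).1 this

theorem coeff_pow_succ_eq_of_subst_X_mul_eq_X {w W h : R⟦X⟧} (hwW : w * W = 1)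
    (hh : h.subst (X * w) = X) (n : ℕ) : coeff n (W ^ (n + 1)) = (n + 1) * coeff (n + 1) h := by
  have hXw : constantCoeff (X * w) = 0 := by simp
  have chain : (d⁄dX R h).subst (X * w) * d⁄dX R (X * w) = 1 := by
    rw [← derivative_subst (HasSubst.of_constantCoeff_zero' hXw), hh, derivative_X]
  have term : ∀ k ∈ range (n + 1), coeff k (d⁄dX R h) *
      coeff n ((X * w) ^ k * (d⁄dX R (X * w) * W ^ (n + 1))) =
        if k = n then coeff n (d⁄dX R h) else 0 := by
    intro k hk
    obtain ⟨t, rfl⟩ := Nat.exists_eq_add_of_le (Nat.lt_succ_iff.1 (mem_range.1 hk))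
    have hcancel : (X * w) ^ k * (d⁄dX R (X * w) * W ^ (k + t + 1)) =
        X ^ k * (d⁄dX R (X * w) * W ^ (t + 1)) := by
      have hk : w ^ k * W ^ k = 1 := by rw [← mul_pow, hwW, one_pow]
      linear_combination (X ^ k * d⁄dX R (X * w) * W ^ (t + 1)) * hk
    rw [hcancel, add_comm k t, coeff_X_pow_mul, coeff_derivative_X_mul_mul_pow hwW]
    by_cases ht : t = 0 <;> simp [ht]
  calc coeff n (W ^ (n + 1))
      = coeff n ((d⁄dX R h).subst (X * w) * (d⁄dX R (X * w) * W ^ (n + 1))) := by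
        rw [← mul_assoc, chain, one_mul]
    _ = coeff n (d⁄dX R h) := by
        rw [coeff_subst_mul hXw, sum_congr rfl term, sum_ite_eq', if_pos (self_mem_range_succ n)]
    _ = (n + 1) * coeff (n + 1) h := by rw [coeff_derivative, mul_comm]

end RatAlgebra

theorem coeff_pow_succ_eq_sum_of_one_add_mul_eq_one {g W : R⟦X⟧} (hg : constantCoeff g = 0)
    (hW : (1 + g) * W = 1) (m n : ℕ) :
    coeff n (W ^ (m + 1)) =
      ∑ k ∈ range (n + 1), (m + k).choose m * ((-1) ^ k * coeff n (g ^ k)) := by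
  have hng : constantCoeff (-g) = 0 := by simp [hg]
  have hng' := HasSubst.of_constantCoeff_zero' hng
  set V : R⟦X⟧ := mk fun k => ((m + k).choose m : R)
  have hV : (1 + g) ^ (m + 1) * V.subst (-g) = 1 := by
    have := congrArg (subst (-g)) (mk_add_choose_mul_one_sub_pow_eq_one (S := R) m)
    have h1 : subst (-g) (1 : R⟦X⟧) = 1 := by simpa using subst_C (a := -g) (1 : R)
    rwa [subst_mul hng', subst_pow hng', subst_sub hng', subst_X hng', h1, sub_neg_eq_add,
      mul_comm] at this
  have hWV : W ^ (m + 1) = V.subst (-g) :=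
    left_inv_eq_right_inv (by rw [← mul_pow, mul_comm, hW, one_pow]) hV
  rw [hWV, coeff_subst_eq_sum_range hng V n.lt_succ_self]
  refine sum_congr rfl fun k _ => ?_
  rw [coeff_mk, neg_pow, ← map_one C, ← map_neg C, ← map_pow, coeff_C_mul]

theorem coeff_pow_eq_of_X_pow_dvd_sub {g g' : R⟦X⟧} {n : ℕ} (h : X ^ (n + 1) ∣ g - g') (k : ℕ) :
    coeff n (g ^ k) = coeff n (g' ^ k) := by
  have := X_pow_dvd_iff.1 (h.trans (sub_dvd_pow_sub_pow g g' k)) n n.lt_succ_self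
  rwa [map_sub, sub_eq_zero] at this

theorem coeff_sum_C_mul_X_pow_pow {ι : Type*} [Fintype ι] [DecidableEq ι] (c : ι → R)
    (e : ι → ℕ) (k n : ℕ) :
    coeff n ((∑ i, C (c i) * X ^ e i) ^ k) =
      ∑ a ∈ (piAntidiag univ k).filter (fun a => ∑ i, e i * a i = n),
        Nat.multinomial univ a * ∏ i, c i ^ a i := by
  rw [sum_pow_eq_sum_piAntidiag, map_sum, sum_filter]
  refine sum_congr rfl fun a _ => ?_
  have hprod : ∏ i, (C (c i) * X ^ e i) ^ a i = C (∏ i, c i ^ a i) * X ^ ∑ i, e i * a i := by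
    rw [map_prod, ← prod_pow_eq_pow_sum, ← prod_mul_distrib]
    exact prod_congr rfl fun i _ => by rw [mul_pow, ← map_pow, ← pow_mul, mul_comm (e i)]
  rw [hprod, ← map_natCast C, ← mul_assoc, ← map_mul, coeff_C_mul_X_pow]
  split_ifs <;> first | rfl | omega

theorem coeff_pow_succ_eq_sum_multinom {g W : R⟦X⟧} (hg : constantCoeff g = 0)
    (hW : (1 + g) * W = 1) {n : ℕ} (c : Fin n → R) (hc : ∀ i : Fin n, coeff (i + 1) g = c i) :
    coeff n (W ^ (n + 1)) =
      ∑ a ∈ (Fintype.piFinset fun _ : Fin n => range (n + 1)).filter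
          (fun a => ∑ i : Fin n, ((i : ℕ) + 1) * a i = n),
        (-1) ^ (∑ i, a i) * (multinom a n : R) * ∏ i, c i ^ a i := by
  set gP : R⟦X⟧ := ∑ i : Fin n, C (c i) * X ^ ((i : ℕ) + 1)
  have hgP : X ^ (n + 1) ∣ g - gP := by
    refine X_pow_dvd_iff.2 fun d hd => ?_
    rw [map_sub, sub_eq_zero, map_sum]
    simp_rw [coeff_C_mul_X_pow]
    rcases d with _ | e
    · simp [hg]
    · rw [sum_eq_single ⟨e, by omega⟩
        (fun i _ hi => if_neg fun he => hi (Fin.ext (Nat.succ_injective he).symm)) (by simp),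
        if_pos rfl, ← hc]
  rw [coeff_pow_succ_eq_sum_of_one_add_mul_eq_one hg hW, ← sum_range_sum_filter_piAntidiag]
  refine sum_congr rfl fun k _ => ?_
  rw [coeff_pow_eq_of_X_pow_dvd_sub hgP, coeff_sum_C_mul_X_pow_pow, mul_sum, mul_sum]
  refine sum_congr rfl fun a ha => ?_
  obtain ⟨rfl, -⟩ := mem_piAntidiag.1 (mem_filter.1 ha).1
  rw [multinom_eq_choose_mul_multinomial]
  push_cast
  ring

end PowerSeries

theorem stmt8_general {R : Type*} [CommRing R] [Algebra ℚ R] (f h : PowerSeries R)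
    (hf0 : coeff 0 f = 0) (hf1 : coeff 1 f = 1)
    (hh0 : coeff 0 h = 0)
    (hinv : psComp f h = PowerSeries.X) (j : ℕ) :
    coeff (j + 1) h =
      (((j : ℚ) + 1)⁻¹) •
        Finset.sum
          (((Fintype.piFinset fun _ : Fin j => Finset.range (j + 1)).filter
            (fun a : Fin j → ℕ => ∑ i : Fin j, ((i : ℕ) + 1) * a i = j)))
          (fun a : Fin j → ℕ =>
            (-1 : R) ^ (∑ i, a i) * (multinom a j : R) *
              ∏ i : Fin j, (coeff ((i : ℕ) + 2) f) ^ a i) := by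
  rw [coeff_zero_eq_constantCoeff_apply] at hf0 hh0
  obtain ⟨w, rfl⟩ : X ∣ f := X_dvd_iff.2 hf0
  have hw0 : constantCoeff w = 1 := by simpa using hf1
  have hwW : w * w.invOfUnit 1 = 1 := mul_invOfUnit w 1 (by simp [hw0])
  have hhf : h.subst (X * w) = X :=
    subst_eq_X_of_subst_eq_X (by simp) (by simp [hf1]) (HasSubst.of_constantCoeff_zero' hh0)
      (by rw [← psComp_eq_subst hh0, hinv])
  have hc : ∀ i : Fin j, coeff (i + 1) (w - 1) = coeff ((i : ℕ) + 2) (X * w) := fun i => by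
    rw [map_sub, coeff_one, if_neg (Nat.succ_ne_zero _), sub_zero, coeff_succ_X_mul]
  rw [← coeff_pow_succ_eq_sum_multinom (by simp [hw0]) (by rwa [add_sub_cancel]) _ hc,
    coeff_pow_succ_eq_of_subst_X_mul_eq_X hwW hhf, eq_inv_smul_iff₀ (by positivity),
    Algebra.smul_def]
  simp

/-- Lagrange inversion: if `f(Y) = Y + ∑_{j≥1} f_j Y^{j+1}` has compositional inverse
`h(Y) = Y + ∑_{j≥1} h_j Y^{j+1}` over a commutative `ℚ`-algebra `R`, then
`h_j = (1/(j+1)) ∑_{a·ℕ = j} (-1)^{|a|} (|a|+j choose a, j) f_1^{a_1} ⋯ f_j^{a_j}`. -/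
theorem stmt8 {R : Type*} [CommRing R] [Algebra ℚ R] (f h : PowerSeries R)
    (hf0 : coeff 0 f = 0) (hf1 : coeff 1 f = 1)
    (hh0 : coeff 0 h = 0) (hh1 : coeff 1 h = 1)
    (hinv : psComp f h = PowerSeries.X) (j : ℕ) (hj : 1 ≤ j) :
    coeff (j + 1) h =
      (((j : ℚ) + 1)⁻¹) •
        Finset.sum
          (((Fintype.piFinset fun _ : Fin j => Finset.range (j + 1)).filter
            (fun a : Fin j → ℕ => ∑ i : Fin j, ((i : ℕ) + 1) * a i = j)))
          (fun a : Fin j → ℕ =>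
            (-1 : R) ^ (∑ i, a i) * (multinom a j : R) *
              ∏ i : Fin j, (coeff ((i : ℕ) + 2) f) ^ a i) :=
  stmt8_general f h hf0 hf1 hh0 hinv j
end
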